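/- Let (V,Q) be a metric vector space such that the polar form B of Q is non-degenerate, let p ∈ V and let r ∈ V with Q(r) ≠ 0. Then the β-image of the affine Q-reflection ξ_{p,r} : x ↦ x − Q(r)⁻¹ B(r, x−p) r equals the Q^↑-reflection of ((F×V)*, Q^↑) in the direction of the vector (−B(r,p), D(r)) ∈ (F×V)*, where Q^↑(a₀,a*) := Q(D⁻¹(a*)). -/

import Mathlib

/-! Setting: a field `F` and a finite-dimensional `F`-vector space `V`. The dual of
`F × V` is identified with `F × V*` via the pairing `⟨(a₀,a*),(x₀,x)⟩ = a₀x₀ + ⟨a*,x⟩`.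
For a quadratic form `Q`, its polar form is `QuadraticMap.polar Q` (the bilinear map
`Q.polarBilin`) and its radical is `LinearMap.ker Q.polarBilin`. -/

variable {F V : Type*} [Field F] [AddCommGroup V] [Module F V] [FiniteDimensional F V]

/-- The dual linear representation `β` of `AGL(V)` on `(F×V)* = F × V*`: for the affinity
`γ : x ↦ t + g x` (with `g ∈ GL(V)`, `t ∈ V`),
`γ^β (a₀, a*) = (a₀ - ⟨a* ∘ g⁻¹, t⟩, a* ∘ g⁻¹)`. -/
def betaMap (g : V ≃ₗ[F] V) (t : V) :
    (F × Module.Dual F V) →ₗ[F] (F × Module.Dual F V) :=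
  LinearMap.prod
    (LinearMap.fst F F (Module.Dual F V) -
      (Module.Dual.eval F V (g.symm t)).comp (LinearMap.snd F F (Module.Dual F V)))
    ((g.symm.toLinearMap.dualMap).comp (LinearMap.snd F F (Module.Dual F V)))

/-- Given a quadratic form `Q` on `V` whose induced map `D = Q.polarBilin` is bijective
(given here as the linear equivalence `e` with `↑e = Q.polarBilin`), the quadratic form
`Q^↑ : F × V* → F, (a₀, a*) ↦ Q (D⁻¹ a*)`. -/
def qUp (Q : QuadraticForm F V) (e : V ≃ₗ[F] Module.Dual F V) :
    QuadraticForm F (F × Module.Dual F V) :=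
  Q.comp (e.symm.toLinearMap ∘ₗ LinearMap.snd F F (Module.Dual F V))

/-- Given a quadratic form `Q̃` on `F × V*` such that `π ∘ D̃ ∘ π^T : V* → V` is invertible
(given here as the linear equivalence `T`, characterised by
`∀ a b, b (T a) = polar Q̃ (0,a) (0,b)`), the quadratic form
`Q̃^↓ : V → F, x ↦ Q̃ (0, T⁻¹ x)`. -/
def qDown (Qt : QuadraticForm F (F × Module.Dual F V)) (T : Module.Dual F V ≃ₗ[F] V) :
    QuadraticForm F V :=
  Qt.comp ((LinearMap.inr F F (Module.Dual F V)) ∘ₗ T.symm.toLinearMap)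

/-- The weak orthogonal group `O'(W,Q)` of a metric vector space, as a set of linear
endomorphisms: bijective isometries fixing the radical elementwise. -/
def wOrth {W : Type*} [AddCommGroup W] [Module F W] (Qt : QuadraticForm F W) :
    Set (W →ₗ[F] W) :=
  {φ | Function.Bijective φ ∧ (∀ w, Qt (φ w) = Qt w) ∧
    ∀ w ∈ LinearMap.ker Qt.polarBilin, φ w = w}

/-- The `β`-image `AO(V,Q)^β` of the motion group of `(V,Q)`. -/
def motionBetaSet (Q : QuadraticForm F V) :
    Set ((F × Module.Dual F V) →ₗ[F] (F × Module.Dual F V)) :=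
  {φ | ∃ (g : V ≃ₗ[F] V) (t : V), (∀ x, Q (g x) = Q x) ∧ φ = betaMap g t}

/-- The `β`-image `AO'(V,Q)^β` of the weak motion group of `(V,Q)`. -/
def wMotionBetaSet (Q : QuadraticForm F V) :
    Set ((F × Module.Dual F V) →ₗ[F] (F × Module.Dual F V)) :=
  {φ | ∃ (g : V ≃ₗ[F] V) (t : V), (∀ x, Q (g x) = Q x) ∧
    (∀ x ∈ LinearMap.ker Q.polarBilin, g x = x) ∧ φ = betaMap g t}

/-! The linear part of `ξ_{p,r}` is `Module.reflection` for the functional `Q(r)⁻¹ B(r, ·)`,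
which takes the value `2` at `r`; it is therefore an involution sending `r` to `-r`, so `β` only
needs `g⁻¹ = g`. On the other side, `D⁻¹ (D r) = r` turns `Q^↑` and its polar form at
`(-B(r,p), D r)` into `Q r` and evaluation at `r`. -/

section

variable {K W : Type*} [Field K] [AddCommGroup W] [Module K W]

theorem QuadraticMap.inv_smul_polarBilin_self (Q : QuadraticForm K W) {r : W} (hr : Q r ≠ 0) :
    ((Q r)⁻¹ • Q.polarBilin r) r = 2 := by
  rw [LinearMap.smul_apply, QuadraticMap.polarBilin_apply_apply, QuadraticMap.polar_self,
    nsmul_eq_mul, smul_eq_mul]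
  field_simp
  norm_num

theorem QuadraticMap.eq_reflection_of_apply (Q : QuadraticForm K W) {r : W} (hr : Q r ≠ 0)
    {g : W ≃ₗ[K] W} (hg : ∀ x, g x = x - (Q r)⁻¹ • Q.polarBilin r x • r) :
    g = Module.reflection (Q.inv_smul_polarBilin_self hr) :=
  LinearEquiv.ext fun x => by
    rw [hg, Module.reflection_apply, LinearMap.smul_apply, smul_eq_mul, mul_smul]

theorem betaMap_apply (g : W ≃ₗ[K] W) (t : W) (u : K × Module.Dual K W) :
    betaMap g t u = (u.1 - u.2 (g.symm t), u.2 ∘ₗ g.symm.toLinearMap) :=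
  rfl

variable {Q : QuadraticForm K W} {e : W ≃ₗ[K] Module.Dual K W}

theorem symm_polarBilin_of_coe_eq (he : (e : W →ₗ[K] Module.Dual K W) = Q.polarBilin) (x : W) :
    e.symm (Q.polarBilin x) = x := by
  rw [← he, LinearEquiv.coe_coe, e.symm_apply_apply]

theorem qUp_apply_polarBilin (he : (e : W →ₗ[K] Module.Dual K W) = Q.polarBilin) (a₀ : K)
    (x : W) : qUp Q e (a₀, Q.polarBilin x) = Q x :=
  congrArg Q (symm_polarBilin_of_coe_eq he x)

theorem polarBilin_qUp_apply (he : (e : W →ₗ[K] Module.Dual K W) = Q.polarBilin) (a₀ : K)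
    (x : W) (u : K × Module.Dual K W) :
    (qUp Q e).polarBilin (a₀, Q.polarBilin x) u = u.2 x := by
  rw [qUp, QuadraticMap.polarBilin_comp, LinearMap.compl₁₂_apply]
  simp only [LinearMap.comp_apply, LinearMap.snd_apply, LinearEquiv.coe_coe,
    symm_polarBilin_of_coe_eq he]
  rw [QuadraticMap.polarBilin_apply_apply, QuadraticMap.polar_comm,
    ← QuadraticMap.polarBilin_apply_apply, ← he, LinearEquiv.coe_coe, e.apply_symm_apply]

end

/-- The affine reflection `ξ_{p,r}` enters as the affinity `x ↦ t + g x` with linear part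
`g = ξ_r` and translation part `t = Q(r)⁻¹ B(r,p) r`. -/
theorem stmt19 (Q : QuadraticForm F V) (e : V ≃ₗ[F] Module.Dual F V)
    (he : (e : V →ₗ[F] Module.Dual F V) = Q.polarBilin)
    (p r : V) (hr : Q r ≠ 0)
    (g : V ≃ₗ[F] V)
    (hg : ∀ x : V, g x = x - (Q r)⁻¹ • Q.polarBilin r x • r) :
    ∀ u : F × Module.Dual F V,
      betaMap g ((Q r)⁻¹ • Q.polarBilin r p • r) u =
        u - (qUp Q e (-(Q.polarBilin r p), Q.polarBilin r))⁻¹ •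
          (qUp Q e).polarBilin (-(Q.polarBilin r p), Q.polarBilin r) u •
            ((-(Q.polarBilin r p), Q.polarBilin r) : F × Module.Dual F V) := by
  intro u
  obtain rfl := Q.eq_reflection_of_apply hr hg
  rw [betaMap_apply, qUp_apply_polarBilin he, polarBilin_qUp_apply he]
  refine Prod.ext ?_ (LinearMap.ext fun x => ?_)
  · simp only [Module.reflection_symm, map_smul, Module.reflection_apply_self, map_neg,
      smul_eq_mul, Prod.fst_sub, Prod.smul_fst]
    ring
  · simp only [Module.reflection_symm, Module.reflection_apply, LinearMap.comp_apply,
      LinearEquiv.coe_coe, LinearMap.smul_apply, map_sub, map_smul, smul_eq_mul, Prod.snd_sub,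
      Prod.smul_snd, LinearMap.sub_apply]
    ring
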